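/- Let ζ > 0, let (Δ_k)_{k∈ℕ} be nonnegative reals with Δ_k → 0, and let (h_k)_{k∈ℕ} be vectors in ℝⁿ such that Σ_k 1{‖h_k‖ ≥ ζ·Δ_k}·‖h_k‖·Δ_k < ∞. Then for every ε > 0, Σ_k 1{‖h_k‖ ≥ ε}·Δ_k < ∞. -/
import Mathlib


open Filter

theorem stmt_14 {n : ℕ} (ζ : ℝ) (hζ : 0 < ζ)
    (Δ : ℕ → ℝ) (hΔ0 : ∀ k, 0 ≤ Δ k) (hΔto0 : Tendsto Δ atTop (nhds 0))
    (h : ℕ → EuclideanSpace ℝ (Fin n))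
    (hsum : Summable (fun k => if ζ * Δ k ≤ ‖h k‖ then ‖h k‖ * Δ k else 0)) :
    ∀ ε : ℝ, 0 < ε → Summable (fun k => if ε ≤ ‖h k‖ then Δ k else 0) := by
  intro ε hε
  -- eventually ζ * Δ k ≤ ε
  have hev : ∀ᶠ k in atTop, ζ * Δ k ≤ ε := by
    have : Tendsto (fun k => ζ * Δ k) atTop (nhds (ζ * 0)) := hΔto0.const_mul ζ
    rw [mul_zero] at this
    exact this.eventually_le_const hε
  obtain ⟨N, hN⟩ := hev.exists_forall_of_atTop
  rw [← summable_nat_add_iff N]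
  have hsum' : Summable (fun k => ε⁻¹ * (if ζ * Δ (k + N) ≤ ‖h (k + N)‖ then ‖h (k + N)‖ * Δ (k + N) else 0)) :=
    (((summable_nat_add_iff N).mpr hsum).mul_left ε⁻¹)
  refine Summable.of_nonneg_of_le (fun k => ?_) (fun k => ?_) hsum'
  · split <;> simp [hΔ0]
  · by_cases hk : ε ≤ ‖h (k + N)‖
    · have h1 : ζ * Δ (k + N) ≤ ‖h (k + N)‖ := le_trans (hN (k + N) (Nat.le_add_left N k)) hk
      simp only [hk, h1, if_true]
      rw [← mul_assoc]
      calc Δ (k + N) = 1 * Δ (k + N) := (one_mul _).symm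
        _ ≤ ε⁻¹ * ‖h (k + N)‖ * Δ (k + N) := by
            apply mul_le_mul_of_nonneg_right _ (hΔ0 _)
            rw [← inv_mul_cancel₀ (ne_of_gt hε)]
            exact mul_le_mul_of_nonneg_left hk (inv_nonneg.mpr hε.le)
    · simp only [hk, if_false]
      split
      · have := hΔ0 (k + N); have := norm_nonneg (h (k + N)); positivity
      · simp
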